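/- Let p_i, p_j, p_l, p_k be points in the plane such that p_l lies strictly on the right side of the directed line from p_i to p_j, p_k lies on the closed left side of that line, and p_l lies outside the disk D(p_i, p_j, p_k) through p_i, p_j, p_k. Then the intersection of D(p_i, p_j, p_k) with the open right halfplane of the directed line p_i p_j is contained in the disk D(p_i, p_l, p_j) through p_i, p_l, p_j. Consequently, any point p in the open right halfplane that is outside D(p_i, p_l, p_j) is also outside D(p_i, p_j, p_k). -/

import Mathlib

/-- Signed area / cross product of `b - a` and `x - a`.  A point `x` lies strictly to the
right of the directed line from `a` to `b` iff `cross a b x < 0`. -/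
def cross (a b x : EuclideanSpace ℝ (Fin 2)) : ℝ :=
  (b 0 - a 0) * (x 1 - a 1) - (b 1 - a 1) * (x 0 - a 0)

lemma distsq (x y : EuclideanSpace ℝ (Fin 2)) :
    dist x y ^ 2 = (x 0 - y 0)^2 + (x 1 - y 1)^2 := by
  rw [EuclideanSpace.dist_eq, Real.sq_sqrt (by positivity)]
  simp [Fin.sum_univ_two, Real.dist_eq, sq_abs]

set_option maxHeartbeats 1000000 in
lemma core (a b c d e f p q s t u v r₁ r₂ : ℝ)
    (hl : (c-a)*(f-b) - (d-b)*(e-a) < 0)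
    (h1i : (p-a)^2+(q-b)^2 = r₁^2) (h1j : (p-c)^2+(q-d)^2 = r₁^2)
    (h2i : (s-a)^2+(t-b)^2 = r₂^2) (h2j : (s-c)^2+(t-d)^2 = r₂^2)
    (h2l : (s-e)^2+(t-f)^2 = r₂^2)
    (hlo : r₁^2 < (p-e)^2+(q-f)^2)
    (hx : (c-a)*(v-b) - (d-b)*(u-a) < 0)
    (hin : (p-u)^2+(q-v)^2 ≤ r₁^2) :
    (s-u)^2+(t-v)^2 ≤ r₂^2 := by
  set crossL := (c-a)*(f-b) - (d-b)*(e-a) with hcrossL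
  set crossX := (c-a)*(v-b) - (d-b)*(u-a) with hcrossX
  set nsq := (c-a)^2 + (d-b)^2 with hnsq
  set wn := 2*(s-p)*(-(d-b)) + 2*(t-q)*(c-a) with hwn
  set Dx := (p-u)^2+(q-v)^2 - r₁^2 - (s-u)^2 - (t-v)^2 + r₂^2 with hDx
  set Dl := (p-e)^2+(q-f)^2 - r₁^2 - (s-e)^2 - (t-f)^2 + r₂^2 with hDl
  have hDi : (p-a)^2+(q-b)^2 - r₁^2 - (s-a)^2 - (t-b)^2 + r₂^2 = 0 := by
    linear_combination h1i - h2i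
  have hDj : (p-c)^2+(q-d)^2 - r₁^2 - (s-c)^2 - (t-d)^2 + r₂^2 = 0 := by
    linear_combination h1j - h2j
  have hDlpos : 0 < Dl := by rw [hDl]; nlinarith [hlo, h2l]
  have hnpos : 0 < nsq := by
    nlinarith [sq_nonneg ((c-a)*(e-a)+(d-b)*(f-b)), sq_nonneg (e-a), sq_nonneg (f-b),
      mul_pos_of_neg_of_neg hl hl]
  have e1 : nsq * Dx = wn * crossX := by
    rw [hnsq, hwn, hDx, hcrossX]
    linear_combination ((c-a)*(u-a)+(d-b)*(v-b)) * hDj +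
      (((c-a)^2+(d-b)^2) - ((c-a)*(u-a)+(d-b)*(v-b))) * hDi
  have e2 : nsq * Dl = wn * crossL := by
    rw [hnsq, hwn, hDl, hcrossL]
    linear_combination ((c-a)*(e-a)+(d-b)*(f-b)) * hDj +
      (((c-a)^2+(d-b)^2) - ((c-a)*(e-a)+(d-b)*(f-b))) * hDi
  have key : nsq * (crossL * Dx) = nsq * (crossX * Dl) := by
    linear_combination crossL * e1 - crossX * e2
  have key2 : crossL * Dx = crossX * Dl := mul_left_cancel₀ (ne_of_gt hnpos) key
  have hneg : crossL * Dx < 0 := by rw [key2]; exact mul_neg_of_neg_of_pos hx hDlpos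
  have hDxpos : 0 < Dx := by
    by_contra h
    push_neg at h
    exact absurd (mul_nonneg_of_nonpos_of_nonpos hl.le h) (not_le.2 hneg)
  rw [hDx] at hDxpos
  linarith

/-- Suppose `p_l` lies strictly to the right of the directed line `p_i → p_j`, `p_k` lies on
the closed left side of that line, and `p_l` lies outside the closed disk `D(p_i,p_j,p_k)`
(the disk centered at `o₁` with radius `r₁` whose boundary passes through `p_i, p_j, p_k`).
Then the part of `D(p_i,p_j,p_k)` in the open right halfplane of `p_i → p_j` is contained in
the closed disk `D(p_i,p_l,p_j)` (centered at `o₂` with radius `r₂`, boundary through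
`p_i, p_l, p_j`); consequently, every point of the open right halfplane that is outside
`D(p_i,p_l,p_j)` is also outside `D(p_i,p_j,p_k)`. -/
theorem stmt8 (pi pj pl pk o₁ o₂ : EuclideanSpace ℝ (Fin 2)) (r₁ r₂ : ℝ)
    (hl : cross pi pj pl < 0) (hk : 0 ≤ cross pi pj pk)
    (h1i : dist o₁ pi = r₁) (h1j : dist o₁ pj = r₁) (h1k : dist o₁ pk = r₁)
    (h2i : dist o₂ pi = r₂) (h2l : dist o₂ pl = r₂) (h2j : dist o₂ pj = r₂)
    (hlout : pl ∉ Metric.closedBall o₁ r₁) :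
    (Metric.closedBall o₁ r₁ ∩ {x | cross pi pj x < 0} ⊆ Metric.closedBall o₂ r₂) ∧
      ∀ p : EuclideanSpace ℝ (Fin 2), cross pi pj p < 0 →
        p ∉ Metric.closedBall o₂ r₂ → p ∉ Metric.closedBall o₁ r₁ := by
  have hr₁ : 0 ≤ r₁ := h1i ▸ dist_nonneg
  have hr₂ : 0 ≤ r₂ := h2i ▸ dist_nonneg
  have hlout' : r₁ ^ 2 < (o₁ 0 - pl 0)^2 + (o₁ 1 - pl 1)^2 := by
    rw [← distsq]
    have h : r₁ < dist pl o₁ := by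
      simpa [Metric.mem_closedBall, not_le] using hlout
    rw [dist_comm] at h
    exact pow_lt_pow_left₀ h hr₁ (by norm_num)
  have main : Metric.closedBall o₁ r₁ ∩ {x | cross pi pj x < 0} ⊆ Metric.closedBall o₂ r₂ := by
    rintro x ⟨hx1, hx2⟩
    rw [Metric.mem_closedBall] at hx1 ⊢
    have hx1' : (o₁ 0 - x 0)^2 + (o₁ 1 - x 1)^2 ≤ r₁ ^ 2 := by
      rw [← distsq, dist_comm]
      exact pow_le_pow_left₀ dist_nonneg hx1 2
    have hcore := core (pi 0) (pi 1) (pj 0) (pj 1) (pl 0) (pl 1) (o₁ 0) (o₁ 1)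
      (o₂ 0) (o₂ 1) (x 0) (x 1) r₁ r₂
      hl
      (by rw [← distsq, h1i]) (by rw [← distsq, h1j])
      (by rw [← distsq, h2i]) (by rw [← distsq, h2j]) (by rw [← distsq, h2l])
      hlout' hx2 hx1'
    have : dist x o₂ ^ 2 ≤ r₂ ^ 2 := by
      rw [dist_comm, distsq]; exact hcore
    nlinarith [dist_nonneg (x := x) (y := o₂)]
  refine ⟨main, ?_⟩
  intro p hp hp2 hp1
  exact hp2 (main ⟨hp1, hp⟩)
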